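/- The space Ξ is complete for the norm ‖ξ‖_A = sup_x (∑_{p ∈ ℤⁿ} |ξ(x-p)|²)^{1/2}. -/

import Mathlib

/-!
Evaluating the term `p = 0` gives `‖ξ x‖ ≤ ‖ξ‖_A`, so a `‖·‖_A`-Cauchy sequence `f k` converges
pointwise to some `ξ`. Fatou's lemma for the series over `ℤⁿ` turns the Cauchy bounds into
`‖f k - ξ‖_A ≤ ε` for large `k`; hence the convergence is uniform, `ξ` is continuous, and the
periodization of `ξ = f k - (f k - ξ)` is finite and bounded.

For each `x`, `√(perSum ξ x)` is the `ℓ²(ℤⁿ)`-norm of the orbit `p ↦ ξ (x - p)`, so the reverse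
triangle inequality in `ℓ²` shows that `√(perSum (f k))` converges uniformly to `√(perSum ξ)`,
which is therefore continuous.
-/

open MeasureTheory Filter ComplexConjugate

noncomputable section

/-- The embedding of the integer lattice `ℤⁿ` into `ℝⁿ`. -/
def latt {n : ℕ} (p : Fin n → ℤ) : Fin n → ℝ := fun i => (p i : ℝ)

/-- The periodization of the square modulus of `ξ`. -/
def perSum {n : ℕ} (ξ : (Fin n → ℝ) → ℂ) (x : Fin n → ℝ) : ℝ :=
  ∑' p : Fin n → ℤ, ‖ξ (x - latt p)‖ ^ 2

/-- Membership in the module `Ξ`: bounded continuous functions whose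
periodization of the square modulus is (summable,) uniformly bounded and continuous. -/
def InXi {n : ℕ} (ξ : (Fin n → ℝ) → ℂ) : Prop :=
  Continuous ξ ∧ (∃ M, ∀ x, ‖ξ x‖ ≤ M) ∧
  (∀ x, Summable fun p : Fin n → ℤ => ‖ξ (x - latt p)‖ ^ 2) ∧
  (∃ K, ∀ x, perSum ξ x ≤ K) ∧ Continuous (perSum ξ)

/-- The norm `‖ξ‖_A = sup_x (∑_{p∈ℤⁿ} |ξ(x-p)|²)^{1/2}`. -/
def normA {n : ℕ} (ξ : (Fin n → ℝ) → ℂ) : ℝ := Real.sqrt (⨆ x, perSum ξ x)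

/-- The `C(𝕋ⁿ)`-valued inner product `⟨ξ,η⟩_A(x) = ∑_{p∈ℤⁿ} conj(ξ(x-p)) η(x-p)`. -/
def innerA {n : ℕ} (ξ η : (Fin n → ℝ) → ℂ) (x : Fin n → ℝ) : ℂ :=
  ∑' p : Fin n → ℤ, conj (ξ (x - latt p)) * η (x - latt p)

open scoped Topology

lemma summable_and_tsum_le_of_tendsto {ι : Type*} {u : ℕ → ι → ℝ} {v : ι → ℝ} {C : ℝ}
    (hv : 0 ≤ v) (huv : ∀ i, Tendsto (fun j => u j i) atTop (𝓝 (v i)))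
    (hu : ∀ᶠ j in atTop, ∀ s : Finset ι, ∑ i ∈ s, u j i ≤ C) :
    Summable v ∧ ∑' i, v i ≤ C := by
  have hfin (s : Finset ι) : ∑ i ∈ s, v i ≤ C :=
    le_of_tendsto (tendsto_finsetSum s fun i _ => huv i) (hu.mono fun j hj => hj s)
  have hsum := summable_of_sum_le hv hfin
  exact ⟨hsum, hsum.tsum_le_of_sum_le hfin⟩

lemma tendstoUniformly_of_dist_le {ι α β : Type*} [PseudoMetricSpace β] {l : Filter ι}
    {F : ι → α → β} {f : α → β} {a : ι → ℝ} (ha : Tendsto a l (𝓝 0))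
    (hdist : ∀ᶠ k in l, ∀ x, dist (f x) (F k x) ≤ a k) :
    TendstoUniformly F f l := by
  rw [Metric.tendstoUniformly_iff]
  intro ε hε
  filter_upwards [hdist, ha.eventually (gt_mem_nhds hε)] with k hdk hk x
  exact (hdk x).trans_lt hk

lemma lp.norm_sq_eq_tsum {ι : Type*} {E : ι → Type*} [∀ i, NormedAddCommGroup (E i)]
    (a : lp E 2) : ‖a‖ ^ 2 = ∑' i, ‖a i‖ ^ 2 := by
  exact_mod_cast lp.norm_rpow_eq_tsum (p := 2) (by norm_num) a

lemma lp.summable_norm_sq {ι : Type*} {E : ι → Type*} [∀ i, NormedAddCommGroup (E i)]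
    (a : lp E 2) : Summable fun i => ‖a i‖ ^ 2 := by
  exact_mod_cast (lp.memℓp a).summable (p := 2) (by norm_num)

variable {n : ℕ}

def PerSumBounded (ξ : (Fin n → ℝ) → ℂ) : Prop :=
  (∀ x, Summable fun p : Fin n → ℤ => ‖ξ (x - latt p)‖ ^ 2) ∧ ∃ K, ∀ x, perSum ξ x ≤ K

lemma InXi.perSumBounded {ξ : (Fin n → ℝ) → ℂ} (h : InXi ξ) : PerSumBounded ξ :=
  ⟨h.2.2.1, h.2.2.2.1⟩

lemma perSum_nonneg (ξ : (Fin n → ℝ) → ℂ) (x : Fin n → ℝ) : 0 ≤ perSum ξ x :=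
  tsum_nonneg fun _ => sq_nonneg _

def orbitL2 (ξ : (Fin n → ℝ) → ℂ) (x : Fin n → ℝ)
    (hs : Summable fun p : Fin n → ℤ => ‖ξ (x - latt p)‖ ^ 2) : lp (fun _ : Fin n → ℤ => ℂ) 2 :=
  ⟨fun p => ξ (x - latt p), memℓp_gen (by simpa using hs)⟩

section orbitL2

variable {g h : (Fin n → ℝ) → ℂ} {x : Fin n → ℝ}
  (hg : Summable fun p : Fin n → ℤ => ‖g (x - latt p)‖ ^ 2)
  (hh : Summable fun p : Fin n → ℤ => ‖h (x - latt p)‖ ^ 2)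

include hg in
lemma perSum_eq_norm_sq : perSum g x = ‖orbitL2 g x hg‖ ^ 2 := by
  rw [lp.norm_sq_eq_tsum]
  rfl

include hg hh in
lemma perSum_sub_eq_norm_sq : perSum (g - h) x = ‖orbitL2 g x hg - orbitL2 h x hh‖ ^ 2 := by
  rw [lp.norm_sq_eq_tsum]
  rfl

include hg hh in
lemma summable_norm_sq_sub_orbit : Summable fun p : Fin n → ℤ => ‖(g - h) (x - latt p)‖ ^ 2 :=
  lp.summable_norm_sq (orbitL2 g x hg - orbitL2 h x hh)

include hg hh in
lemma perSum_sub_le : perSum (g - h) x ≤ 2 * perSum g x + 2 * perSum h x := by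
  rw [perSum_sub_eq_norm_sq hg hh, perSum_eq_norm_sq hg, perSum_eq_norm_sq hh]
  set a := orbitL2 g x hg
  set b := orbitL2 h x hh
  calc ‖a - b‖ ^ 2 ≤ (‖a‖ + ‖b‖) ^ 2 := pow_le_pow_left₀ (norm_nonneg _) (norm_sub_le a b) 2
    _ ≤ 2 * ‖a‖ ^ 2 + 2 * ‖b‖ ^ 2 := by nlinarith [sq_nonneg (‖a‖ - ‖b‖)]

include hg hh in
lemma abs_sqrt_perSum_sub_sqrt_perSum_le :
    |√(perSum g x) - √(perSum h x)| ≤ √(perSum (g - h) x) := by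
  rw [perSum_eq_norm_sq hg, perSum_eq_norm_sq hh, perSum_sub_eq_norm_sq hg hh]
  simp only [Real.sqrt_sq (norm_nonneg _)]
  exact abs_norm_sub_norm_le _ _

end orbitL2

lemma PerSumBounded.sub {g h : (Fin n → ℝ) → ℂ} (hg : PerSumBounded g) (hh : PerSumBounded h) :
    PerSumBounded (g - h) := by
  obtain ⟨Kg, hKg⟩ := hg.2
  obtain ⟨Kh, hKh⟩ := hh.2
  refine ⟨fun x => summable_norm_sq_sub_orbit (hg.1 x) (hh.1 x), 2 * Kg + 2 * Kh, fun x => ?_⟩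
  linarith [perSum_sub_le (hg.1 x) (hh.1 x), hKg x, hKh x]

lemma sqrt_perSum_le_normA {ξ : (Fin n → ℝ) → ℂ} (h : PerSumBounded ξ) (x : Fin n → ℝ) :
    √(perSum ξ x) ≤ normA ξ := by
  obtain ⟨K, hK⟩ := h.2
  exact Real.sqrt_le_sqrt (le_ciSup ⟨K, Set.forall_mem_range.2 hK⟩ x)

lemma norm_le_normA {ξ : (Fin n → ℝ) → ℂ} (h : PerSumBounded ξ) (x : Fin n → ℝ) :
    ‖ξ x‖ ≤ normA ξ := by
  refine le_trans ?_ (sqrt_perSum_le_normA h x)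
  rw [Real.le_sqrt (norm_nonneg _) (perSum_nonneg ξ x)]
  have hx : x - latt 0 = x := by ext; simp [latt]
  simpa [hx, perSum] using (h.1 x).le_tsum 0 fun p _ => sq_nonneg _

lemma normA_le {ξ : (Fin n → ℝ) → ℂ} {c : ℝ} (hc : 0 ≤ c) (h : ∀ x, perSum ξ x ≤ c ^ 2) :
    normA ξ ≤ c :=
  (Real.sqrt_le_left hc).2 (ciSup_le h)

lemma dist_le_normA_sub {g h : (Fin n → ℝ) → ℂ} (hgh : PerSumBounded (g - h)) (x : Fin n → ℝ) :
    dist (g x) (h x) ≤ normA (g - h) :=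
  (dist_eq_norm _ _).trans_le (norm_le_normA hgh x)

/-- Fatou's lemma for the series `perSum`. -/
lemma perSum_sub_le_of_tendsto {f : ℕ → (Fin n → ℝ) → ℂ} {ξ : (Fin n → ℝ) → ℂ}
    (hb : ∀ k, PerSumBounded (f k)) (hξ : ∀ x, Tendsto (fun j => f j x) atTop (𝓝 (ξ x)))
    {k : ℕ} {ε : ℝ} (hε : ∀ᶠ j in atTop, normA (f k - f j) ≤ ε) (x : Fin n → ℝ) :
    (Summable fun p : Fin n → ℤ => ‖(f k - ξ) (x - latt p)‖ ^ 2) ∧ perSum (f k - ξ) x ≤ ε ^ 2 := by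
  refine summable_and_tsum_le_of_tendsto (fun p => sq_nonneg _)
    (fun p => ((tendsto_const_nhds.sub (hξ _)).norm).pow 2) ?_
  filter_upwards [hε] with j hj s
  have hkj := (hb k).sub (hb j)
  have hsqrt : √(perSum (f k - f j) x) ≤ ε := (sqrt_perSum_le_normA hkj x).trans hj
  calc ∑ p ∈ s, ‖(f k - f j) (x - latt p)‖ ^ 2 ≤ perSum (f k - f j) x :=
        (hkj.1 x).sum_le_tsum s fun p _ => sq_nonneg _
    _ ≤ ε ^ 2 := (Real.sqrt_le_left ((Real.sqrt_nonneg _).trans hsqrt)).1 hsqrt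

theorem stmt3 {n : ℕ} (f : ℕ → (Fin n → ℝ) → ℂ) (hf : ∀ k, InXi (f k))
    (hcau : ∀ ε > 0, ∃ N, ∀ j ≥ N, ∀ k ≥ N, normA (f j - f k) < ε) :
    ∃ ξ, InXi ξ ∧ Tendsto (fun k => normA (f k - ξ)) atTop (nhds 0) := by
  have hb k : PerSumBounded (f k) := (hf k).perSumBounded
  have hcauchy x : CauchySeq fun k => f k x := by
    refine Metric.cauchySeq_iff.2 fun ε hε => ?_
    obtain ⟨N, hN⟩ := hcau ε hε
    exact ⟨N, fun j hj k hk => (dist_le_normA_sub ((hb j).sub (hb k)) x).trans_lt (hN j hj k hk)⟩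
  choose ξ hξ using fun x => cauchySeq_tendsto_of_complete (hcauchy x)
  have hclose : ∀ ε > 0, ∀ᶠ k in atTop, PerSumBounded (f k - ξ) ∧ normA (f k - ξ) ≤ ε := by
    intro ε hε
    obtain ⟨N, hN⟩ := hcau ε hε
    filter_upwards [eventually_ge_atTop N] with k hk
    have hfatou := perSum_sub_le_of_tendsto hb hξ
      ((eventually_ge_atTop N).mono fun j hj => (hN k hk j hj).le)
    exact ⟨⟨fun x => (hfatou x).1, ε ^ 2, fun x => (hfatou x).2⟩,
      normA_le hε.le fun x => (hfatou x).2⟩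
  have hlim : Tendsto (fun k => normA (f k - ξ)) atTop (𝓝 0) := by
    refine tendsto_order.2 ⟨fun a ha => Eventually.of_forall fun k => ?_, fun a ha => ?_⟩
    · exact ha.trans_le (Real.sqrt_nonneg _)
    · exact (hclose (a / 2) (by linarith)).mono fun k hk => by linarith [hk.2]
  have hbdd : ∀ᶠ k in atTop, PerSumBounded (f k - ξ) := (hclose 1 one_pos).mono fun _ h => h.1
  obtain ⟨N, hN⟩ := hbdd.exists
  have hξb : PerSumBounded ξ := by simpa using (hb N).sub hN
  have hξc : Continuous ξ :=
    (tendstoUniformly_of_dist_le hlim (hbdd.mono fun k hk x => by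
      rw [dist_comm]; exact dist_le_normA_sub hk x)).continuous
      (Eventually.of_forall fun k => (hf k).1).frequently
  have hsqrtc : Continuous fun x => √(perSum ξ x) := by
    refine (tendstoUniformly_of_dist_le hlim (hbdd.mono fun k hk x => ?_)).continuous
      (Eventually.of_forall fun k => (hf k).2.2.2.2.sqrt).frequently
    rw [Real.dist_eq, abs_sub_comm]
    exact (abs_sqrt_perSum_sub_sqrt_perSum_le ((hb k).1 x) (hξb.1 x)).trans
      (sqrt_perSum_le_normA hk x)
  have hpc : Continuous (perSum ξ) :=
    (hsqrtc.pow 2).congr fun x => Real.sq_sqrt (perSum_nonneg ξ x)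
  exact ⟨ξ, ⟨hξc, ⟨normA ξ, norm_le_normA hξb⟩, hξb.1, hξb.2, hpc⟩, hlim⟩
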